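/- arXiv:2106.10126 — 2 statements merged into one kernel-verified Lean document; each statement's English description precedes it below -/
import Mathlib

section
/- There do not exist translation vectors $t_1, t_2 \in \mathbb{R}^2$ such that the two open standard triangles $\triangle^2(1) + t_1$ and $\triangle^2(1) + t_2$ are disjoint and both contained in the open standard simplex $\triangle^2(s)$ for any $s < 2$. Consequently, the optimal container side length for packing two open unit triangles of the same shape $\triangle^2(1)$ by translations is $2$. -/
/-- The open standard simplex of side length `r` in the plane. -/
def openSimplex2 (r : ℝ) : Set (ℝ × ℝ) :=
  {p : ℝ × ℝ | 0 < p.1 ∧ 0 < p.2 ∧ p.1 + p.2 < r}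

lemma aux_sub {t : ℝ × ℝ} {s : ℝ}
    (h : (· + t) '' openSimplex2 1 ⊆ openSimplex2 s) :
    0 ≤ t.1 ∧ 0 ≤ t.2 ∧ t.1 + t.2 + 1 ≤ s := by
  have key : ∀ p : ℝ × ℝ, p ∈ openSimplex2 1 → (p + t) ∈ openSimplex2 s := by
    intro p hp
    exact h ⟨p, hp, rfl⟩
  refine ⟨?_, ?_, ?_⟩
  · by_contra hc
    push_neg at hc
    set ε := min (-t.1 / 2) (1/4) with hε
    have hε0 : 0 < ε := lt_min (by linarith) (by norm_num)
    have hε1 : ε ≤ -t.1 / 2 := min_le_left _ _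
    have hε2 : ε ≤ 1/4 := min_le_right _ _
    have := key (ε, ε) ⟨hε0, hε0, by simpa using by linarith⟩
    obtain ⟨h1, _, _⟩ := this
    simp only [Prod.fst_add] at h1
    linarith
  · by_contra hc
    push_neg at hc
    set ε := min (-t.2 / 2) (1/4) with hε
    have hε0 : 0 < ε := lt_min (by linarith) (by norm_num)
    have hε1 : ε ≤ -t.2 / 2 := min_le_left _ _
    have hε2 : ε ≤ 1/4 := min_le_right _ _
    have := key (ε, ε) ⟨hε0, hε0, by simpa using by linarith⟩
    obtain ⟨_, h2, _⟩ := this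
    simp only [Prod.snd_add] at h2
    linarith
  · by_contra hc
    push_neg at hc
    set ε := min ((t.1 + t.2 + 1 - s) / 2) (1/4) with hε
    have hε0 : 0 < ε := lt_min (by linarith) (by norm_num)
    have hε1 : ε ≤ (t.1 + t.2 + 1 - s) / 2 := min_le_left _ _
    have hε2 : ε ≤ 1/4 := min_le_right _ _
    have := key (1 - 2*ε, ε) ⟨by simp; linarith, hε0, by simpa using by linarith⟩
    obtain ⟨_, _, h3⟩ := this
    simp only [Prod.fst_add, Prod.snd_add] at h3
    linarith

lemma no_fit {s : ℝ} (hs : s < 2) :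
    ¬ ∃ t₁ t₂ : ℝ × ℝ,
        Disjoint ((· + t₁) '' openSimplex2 1) ((· + t₂) '' openSimplex2 1) ∧
        (· + t₁) '' openSimplex2 1 ⊆ openSimplex2 s ∧
        (· + t₂) '' openSimplex2 1 ⊆ openSimplex2 s := by
  rintro ⟨t₁, t₂, hdisj, h₁, h₂⟩
  obtain ⟨a1, a2, a3⟩ := aux_sub h₁
  obtain ⟨b1, b2, b3⟩ := aux_sub h₂
  set d1 := t₂.1 - t₁.1 with hd1
  set d2 := t₂.2 - t₁.2 with hd2
  have hd1l : -1 < d1 := by simp only [hd1]; linarith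
  have hd1u : d1 < 1 := by simp only [hd1]; linarith
  have hd2l : -1 < d2 := by simp only [hd2]; linarith
  have hd2u : d2 < 1 := by simp only [hd2]; linarith
  have hdsl : -1 < d1 + d2 := by simp only [hd1, hd2]; linarith
  have hdsu : d1 + d2 < 1 := by simp only [hd1, hd2]; linarith
  set m1 := max d1 0 with hm1
  set m2 := max d2 0 with hm2
  set m := min (d1 + d2) 0 with hm
  have hm10 : 0 ≤ m1 := le_max_right _ _
  have hm1d : d1 ≤ m1 := le_max_left _ _
  have hm20 : 0 ≤ m2 := le_max_right _ _
  have hm2d : d2 ≤ m2 := le_max_left _ _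
  have hm0 : m ≤ 0 := min_le_right _ _
  have hmd : m ≤ d1 + d2 := min_le_left _ _
  set δ := (1 + m - m1 - m2) / 3 with hδ
  have hδ0 : 0 < δ := by
    rcases max_choice d1 0 with h1 | h1 <;>
    rcases max_choice d2 0 with h2 | h2 <;>
    rcases min_choice (d1 + d2) 0 with h3 | h3 <;>
    · rw [hδ]
      rw [← hm1] at h1; rw [← hm2] at h2; rw [← hm] at h3
      rw [h1, h2, h3]; linarith
  have hp : (m1 + δ, m2 + δ) ∈ openSimplex2 1 :=
    ⟨by simp; linarith, by simp; linarith, by simp; linarith⟩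
  have hq : (m1 + δ - d1, m2 + δ - d2) ∈ openSimplex2 1 :=
    ⟨by simp; linarith, by simp; linarith, by simp; linarith⟩
  have hmem1 : (m1 + δ + t₁.1, m2 + δ + t₁.2) ∈ (· + t₁) '' openSimplex2 1 :=
    ⟨(m1 + δ, m2 + δ), hp, by simp [Prod.ext_iff]⟩
  have hmem2 : (m1 + δ + t₁.1, m2 + δ + t₁.2) ∈ (· + t₂) '' openSimplex2 1 :=
    ⟨(m1 + δ - d1, m2 + δ - d2), hq, by
      simp [Prod.ext_iff, hd1, hd2]; constructor <;> ring⟩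
  exact (Set.disjoint_left.mp hdisj hmem1) hmem2

/-- Two disjoint translates of the open unit triangle never fit into the open
standard simplex of side length `s < 2`, and the optimal container side length
for two translated unit triangles is `2`. -/
theorem two_translated_unit_triangles :
    (∀ s : ℝ, s < 2 → ¬ ∃ t₁ t₂ : ℝ × ℝ,
        Disjoint ((· + t₁) '' openSimplex2 1) ((· + t₂) '' openSimplex2 1) ∧
        (· + t₁) '' openSimplex2 1 ⊆ openSimplex2 s ∧
        (· + t₂) '' openSimplex2 1 ⊆ openSimplex2 s) ∧
      sInf {s : ℝ | ∃ t₁ t₂ : ℝ × ℝ,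
        Disjoint ((· + t₁) '' openSimplex2 1) ((· + t₂) '' openSimplex2 1) ∧
        (· + t₁) '' openSimplex2 1 ⊆ openSimplex2 s ∧
        (· + t₂) '' openSimplex2 1 ⊆ openSimplex2 s} = 2 := by
  refine ⟨fun s hs => no_fit hs, ?_⟩
  apply IsLeast.csInf_eq
  constructor
  · -- 2 is in the set: t₁ = 0, t₂ = (1,0)
    refine ⟨(0, 0), (1, 0), ?_, ?_, ?_⟩
    · rw [Set.disjoint_left]
      rintro p ⟨x, hx, rfl⟩ ⟨y, hy, hxy⟩
      obtain ⟨hx1, hx2, hx3⟩ := hx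
      obtain ⟨hy1, hy2, hy3⟩ := hy
      have h1 : y.1 + 1 = x.1 + 0 := congrArg Prod.fst hxy
      simp only at *
      linarith
    · rintro p ⟨x, ⟨hx1, hx2, hx3⟩, rfl⟩
      exact ⟨by simpa using hx1, by simpa using hx2, by simp; linarith⟩
    · rintro p ⟨x, ⟨hx1, hx2, hx3⟩, rfl⟩
      exact ⟨by simp; linarith, by simpa using hx2, by simp; linarith⟩
  · intro s hsmem
    by_contra hc
    push_neg at hc
    exact no_fit hc hsmem
end

section
/- If $A_1, A_2$ are $2 \times 2$ integer matrices with determinant $\pm 1$ and $t_1, t_2 \in \mathbb{R}^2$ are such that the sets $A_i(\triangle^2(1)) + t_i$, $i = 1,2$, are disjoint and contained in $\triangle^2(s)$, then $s \ge 2$. -/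
/-!
Each image is the interior of a lattice triangle whose vertices lie in the closed simplex of
side `s` and in a single coset `t + ℤ²`. For `s < 2` such a coset meets the closed simplex in at
most the three points `f`, `f + e₀`, `f + e₁`, where `f = fract t`; so the image is the
translate `f + △²(1)`, and `f + e₀` being a vertex gives `f ∈ closedSimplex2 (s - 1)`.
Two translates of `△²(1)` by vectors of a closed simplex of side `< 1` always meet.
-/

/-- The open standard simplex of side length `r` in the plane (as a subset of
`Fin 2 → ℝ`). -/
def openSimplex2' (r : ℝ) : Set (Fin 2 → ℝ) :=
  {x | 0 < x 0 ∧ 0 < x 1 ∧ x 0 + x 1 < r}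

/-- The image of a set under the integral affine map `x ↦ Ax + t`. -/
def affineImage2 (A : Matrix (Fin 2) (Fin 2) ℤ) (t : Fin 2 → ℝ)
    (S : Set (Fin 2 → ℝ)) : Set (Fin 2 → ℝ) :=
  (fun x => (A.map (Int.cast : ℤ → ℝ)).mulVec x + t) '' S

open Set Affine

open scoped Pointwise

def closedSimplex2 (r : ℝ) : Set (Fin 2 → ℝ) :=
  {x | 0 ≤ x 0 ∧ 0 ≤ x 1 ∧ x 0 + x 1 ≤ r}

theorem isClosed_closedSimplex2 (r : ℝ) : IsClosed (closedSimplex2 r) :=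
  (isClosed_le continuous_const (continuous_apply 0)).inter <|
    (isClosed_le continuous_const (continuous_apply 1)).inter <|
    isClosed_le (f := fun x : Fin 2 → ℝ => x 0 + x 1) (by fun_prop) continuous_const

theorem closure_openSimplex2'_subset (r : ℝ) : closure (openSimplex2' r) ⊆ closedSimplex2 r :=
  closure_minimal (fun _ ⟨h0, h1, h⟩ => ⟨h0.le, h1.le, h.le⟩) (isClosed_closedSimplex2 r)

theorem closedSimplex2_subset_closure {r : ℝ} (hr : 0 < r) :
    closedSimplex2 r ⊆ closure (openSimplex2' r) := by
  intro v hv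
  have hseg : openSegment ℝ (fun _ => r / 3) v ⊆ openSimplex2' r := by
    rintro x ⟨a, b, ha, hb, hab, rfl⟩
    obtain ⟨hv0, hv1, hv⟩ := hv
    simp only [openSimplex2', mem_ofPred_eq, Pi.add_apply, Pi.smul_apply, smul_eq_mul]
    exact ⟨by positivity, by positivity, by nlinarith⟩
  exact closure_mono hseg (segment_subset_closure_openSegment (right_mem_segment ℝ _ _))

theorem eq_fract_or_eq_fract_add_one {R : Type*} [Ring R] [LinearOrder R] [IsStrictOrderedRing R]
    [FloorRing R] {x y : R} (hx₀ : 0 ≤ x) (hx₂ : x < 2) {n : ℤ}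
    (hxy : x = y + n) : x = Int.fract y ∨ x = Int.fract y + 1 := by
  have hfract : Int.fract x = Int.fract y := by rw [hxy, Int.fract_add_intCast]
  have h0 : 0 ≤ ⌊x⌋ := Int.floor_nonneg.mpr hx₀
  have h2 : ⌊x⌋ < 2 := Int.floor_lt.mpr (by exact_mod_cast hx₂)
  rw [← Int.floor_add_fract x, hfract]
  rcases (by omega : ⌊x⌋ = 0 ∨ ⌊x⌋ = 1) with h | h <;> simp [h, add_comm]

theorem Affine.Simplex.exists_eq_reindex_of_range_subset {k V P : Type*} [Ring k] [Nontrivial k]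
    [AddCommGroup V] [Module k V] [AddTorsor V P] {n : ℕ} {s t : Simplex k P n}
    (h : range s.points ⊆ range t.points) : ∃ e : Fin (n + 1) ≃ Fin (n + 1), s = t.reindex e := by
  choose g hg using fun i => h (mem_range_self i)
  have hg_inj : Function.Injective g := fun i j hij =>
    s.independent.injective (by rw [← hg i, ← hg j, hij])
  refine ⟨(Equiv.ofBijective g (Finite.injective_iff_bijective.mp hg_inj)).symm, ?_⟩
  ext i : 1
  simp [hg]

def unitTriangle : Simplex ℝ (Fin 2 → ℝ) 2 where
  points := ![0, Pi.single 0 1, Pi.single 1 1]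
  independent := by
    rw [affineIndependent_iff_of_fintype]
    intro w hw hv
    rw [Finset.weightedVSub_eq_linear_combination _ hw] at hv
    have h1 : w 1 = 0 := by simpa [Fin.sum_univ_three] using congrFun hv 0
    have h2 : w 2 = 0 := by simpa [Fin.sum_univ_three] using congrFun hv 1
    rw [Fin.sum_univ_three] at hw
    intro i
    fin_cases i
    exacts [show w 0 = 0 by linarith, h1, h2]

theorem unitTriangle_interior : unitTriangle.interior = openSimplex2' 1 := by
  ext x
  constructor
  · rintro ⟨w, hw, hwI, rfl⟩
    have hx : ∑ i, w i • unitTriangle.points i = ![w 1, w 2] := by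
      ext j
      fin_cases j <;> simp [Fin.sum_univ_three, unitTriangle]
    rw [Finset.affineCombination_eq_linear_combination _ _ _ hw, hx]
    rw [Fin.sum_univ_three] at hw
    exact ⟨(hwI 1).1, (hwI 2).1, show w 1 + w 2 < 1 by linarith [(hwI 0).1]⟩
  · rintro ⟨h0, h1, h⟩
    have hw : ∑ i, ![1 - x 0 - x 1, x 0, x 1] i = 1 := by
      rw [Fin.sum_univ_three]
      show 1 - x 0 - x 1 + x 0 + x 1 = 1
      ring
    refine ⟨![1 - x 0 - x 1, x 0, x 1], hw, ?_, ?_⟩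
    · intro i
      fin_cases i
      exacts [show 1 - x 0 - x 1 ∈ Ioo 0 1 from ⟨by linarith, by linarith⟩,
        show x 0 ∈ Ioo 0 1 from ⟨h0, by linarith⟩, show x 1 ∈ Ioo 0 1 from ⟨h1, by linarith⟩]
    · rw [Finset.affineCombination_eq_linear_combination _ _ _ hw]
      ext j
      fin_cases j <;> simp [Fin.sum_univ_three, unitTriangle]

def translatedUnitTriangle (u : Fin 2 → ℝ) : Simplex ℝ (Fin 2 → ℝ) 2 :=
  unitTriangle.map (AffineEquiv.constVAdd ℝ _ u).toAffineMap (AffineEquiv.injective _)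

theorem translatedUnitTriangle_points (u : Fin 2 → ℝ) :
    (translatedUnitTriangle u).points = ![u, u + Pi.single 0 1, u + Pi.single 1 1] := by
  change (AffineEquiv.constVAdd ℝ (Fin 2 → ℝ) u).toAffineMap ∘ unitTriangle.points = _
  ext i : 1
  fin_cases i <;> simp [unitTriangle]

theorem translatedUnitTriangle_interior (u : Fin 2 → ℝ) :
    (translatedUnitTriangle u).interior = u +ᵥ openSimplex2' 1 := by
  refine (unitTriangle.interior_map _).trans ?_
  rw [unitTriangle_interior]
  ext x
  simp [mem_vadd_set_iff_neg_vadd_mem]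

theorem mem_range_translatedUnitTriangle_points {s : ℝ} (hs : s < 2) {p t : Fin 2 → ℝ}
    (hp : p ∈ closedSimplex2 s) (hpt : ∀ j, ∃ n : ℤ, p j = t j + n) :
    p ∈ range (translatedUnitTriangle fun j => Int.fract (t j)).points := by
  obtain ⟨hp0, hp1, hp⟩ := hp
  obtain ⟨n₀, h₀⟩ := hpt 0
  obtain ⟨n₁, h₁⟩ := hpt 1
  have f0 := Int.fract_nonneg (t 0)
  have f1 := Int.fract_nonneg (t 1)
  rw [translatedUnitTriangle_points]
  rcases eq_fract_or_eq_fract_add_one hp0 (by linarith) h₀ with e₀ | e₀ <;>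
  rcases eq_fract_or_eq_fract_add_one hp1 (by linarith) h₁ with e₁ | e₁
  · exact ⟨0, by ext j; fin_cases j <;> simp [e₀, e₁]⟩
  · exact ⟨2, by ext j; fin_cases j <;> simp [e₀, e₁]⟩
  · exact ⟨1, by ext j; fin_cases j <;> simp [e₀, e₁]⟩
  · linarith

section IntAffineMap

variable {n : Type*} [Fintype n] [DecidableEq n]

def intAffineMap (A : Matrix n n ℤ) (t : n → ℝ) : (n → ℝ) →ᵃ[ℝ] (n → ℝ) :=
  (Matrix.toLin' (A.map (Int.cast : ℤ → ℝ))).toAffineMap + AffineMap.const ℝ _ t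

theorem intAffineMap_apply (A : Matrix n n ℤ) (t x : n → ℝ) :
    intAffineMap A t x = (A.map (Int.cast : ℤ → ℝ)).mulVec x + t :=
  rfl

theorem intAffineMap_injective {A : Matrix n n ℤ} (hA : A.det ≠ 0) (t : n → ℝ) :
    Function.Injective (intAffineMap A t) := by
  intro x y hxy
  rw [intAffineMap_apply, intAffineMap_apply, add_left_inj] at hxy
  refine Matrix.mulVec_injective_of_det_ne_zero ?_ hxy
  rw [← Int.cast_det]
  exact_mod_cast hA

end IntAffineMap

theorem affineImage2_eq_image (A : Matrix (Fin 2) (Fin 2) ℤ) (t : Fin 2 → ℝ)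
    (S : Set (Fin 2 → ℝ)) : affineImage2 A t S = intAffineMap A t '' S :=
  rfl

theorem exists_intAffineMap_unitTriangle_points_eq (A : Matrix (Fin 2) (Fin 2) ℤ)
    (t : Fin 2 → ℝ) (i : Fin 3) (j : Fin 2) :
    ∃ n : ℤ, intAffineMap A t (unitTriangle.points i) j = t j + n := by
  fin_cases i
  · exact ⟨0, by simp [intAffineMap_apply, unitTriangle]⟩
  · exact ⟨A j 0, by simp [intAffineMap_apply, unitTriangle, add_comm]⟩
  · exact ⟨A j 1, by simp [intAffineMap_apply, unitTriangle, add_comm]⟩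

theorem intAffineMap_unitTriangle_points_mem {A : Matrix (Fin 2) (Fin 2) ℤ} {t : Fin 2 → ℝ}
    {s : ℝ} (hsub : affineImage2 A t (openSimplex2' 1) ⊆ openSimplex2' s) (i : Fin 3) :
    intAffineMap A t (unitTriangle.points i) ∈ closedSimplex2 s := by
  have hvertex : unitTriangle.points i ∈ closure (openSimplex2' 1) := by
    refine closedSimplex2_subset_closure one_pos ?_
    fin_cases i <;> simp [closedSimplex2, unitTriangle]
  have hcont : Continuous (intAffineMap A t) := (intAffineMap A t).continuous_of_finiteDimensional
  exact closure_openSimplex2'_subset s <| closure_mono hsub <|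
    image_closure_subset_closure_image hcont (mem_image_of_mem _ hvertex)

theorem exists_affineImage2_eq_vadd {A : Matrix (Fin 2) (Fin 2) ℤ} (hA : A.det ≠ 0)
    {t : Fin 2 → ℝ} {s : ℝ} (hs : s < 2)
    (hsub : affineImage2 A t (openSimplex2' 1) ⊆ openSimplex2' s) :
    ∃ u ∈ closedSimplex2 (s - 1), affineImage2 A t (openSimplex2' 1) = u +ᵥ openSimplex2' 1 := by
  set S := unitTriangle.map (intAffineMap A t) (intAffineMap_injective hA t)
  set f : Fin 2 → ℝ := fun j => Int.fract (t j)
  have hS : S.interior = affineImage2 A t (openSimplex2' 1) := by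
    rw [Simplex.interior_map, unitTriangle_interior, affineImage2_eq_image]
  obtain ⟨e, he⟩ : ∃ e, S = (translatedUnitTriangle f).reindex e := by
    refine Simplex.exists_eq_reindex_of_range_subset ?_
    rintro _ ⟨i, rfl⟩
    exact mem_range_translatedUnitTriangle_points hs (intAffineMap_unitTriangle_points_mem hsub i)
      (exists_intAffineMap_unitTriangle_points_eq A t i)
  have hvertex : f + Pi.single 0 1 ∈ closedSimplex2 s := by
    obtain ⟨i, hi⟩ : f + Pi.single 0 1 ∈ range S.points := by
      rw [he, Simplex.reindex_range_points, translatedUnitTriangle_points]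
      exact ⟨1, rfl⟩
    exact hi ▸ intAffineMap_unitTriangle_points_mem hsub i
  refine ⟨f, ⟨Int.fract_nonneg _, Int.fract_nonneg _, ?_⟩, ?_⟩
  · have h : f 0 + 1 + f 1 ≤ s := by simpa using hvertex.2.2
    linarith
  · rw [← hS, he, Simplex.interior_reindex, translatedUnitTriangle_interior]

theorem vadd_openSimplex2'_not_disjoint {r : ℝ} (hr : r < 1) {u v : Fin 2 → ℝ}
    (hu : u ∈ closedSimplex2 r) (hv : v ∈ closedSimplex2 r) :
    ¬ Disjoint (u +ᵥ openSimplex2' 1) (v +ᵥ openSimplex2' 1) := by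
  obtain ⟨hu0, hu1, hu⟩ := hu
  obtain ⟨hv0, hv1, hv⟩ := hv
  -- `max a b ≤ a + b` for `a, b ≥ 0`: the coordinate sum of `max u v` exceeds that of `u`, or
  -- of `v`, by at most `r < 1`
  have hmax₀ : max (u 0) (v 0) ≤ u 0 + v 0 := max_le (by linarith) (by linarith)
  have hmax₁ : max (u 1) (v 1) ≤ u 1 + v 1 := max_le (by linarith) (by linarith)
  rw [not_disjoint_iff]
  refine ⟨fun j => max (u j) (v j) + (1 - r) / 4, ?_, ?_⟩ <;>
    rw [mem_vadd_set_iff_neg_vadd_mem] <;>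
    simp only [openSimplex2', mem_ofPred_eq, vadd_eq_add, Pi.add_apply, Pi.neg_apply] <;>
    refine ⟨?_, ?_, ?_⟩ <;>
    linarith [le_max_left (u 0) (v 0), le_max_right (u 0) (v 0),
      le_max_left (u 1) (v 1), le_max_right (u 1) (v 1)]

/-- Two disjoint integral affine images of the open unit simplex inside the
open simplex of side `s` force `s ≥ 2`. -/
theorem two_simplex_packing_width
    (A₁ A₂ : Matrix (Fin 2) (Fin 2) ℤ)
    (h₁ : A₁.det = 1 ∨ A₁.det = -1) (h₂ : A₂.det = 1 ∨ A₂.det = -1)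
    (t₁ t₂ : Fin 2 → ℝ) (s : ℝ)
    (hdisj : Disjoint (affineImage2 A₁ t₁ (openSimplex2' 1))
      (affineImage2 A₂ t₂ (openSimplex2' 1)))
    (hsub₁ : affineImage2 A₁ t₁ (openSimplex2' 1) ⊆ openSimplex2' s)
    (hsub₂ : affineImage2 A₂ t₂ (openSimplex2' 1) ⊆ openSimplex2' s) :
    2 ≤ s := by
  by_contra! hs
  obtain ⟨u, hu, hT₁⟩ := exists_affineImage2_eq_vadd (Int.isUnit_iff.mpr h₁).ne_zero hs hsub₁
  obtain ⟨v, hv, hT₂⟩ := exists_affineImage2_eq_vadd (Int.isUnit_iff.mpr h₂).ne_zero hs hsub₂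
  rw [hT₁, hT₂] at hdisj
  exact vadd_openSimplex2'_not_disjoint (by linarith) hu hv hdisj
end
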